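/- For k ∈ (0,1), with 𝓛_+ = -∂_ξ² - (1+k²) + 6k² sn², the following pointwise identities hold: 𝓛_+(sn) = 4k² sn³; 𝓛_+(cn·dn·∫₀^ξ sn²/dn² dy) = -2 sn (1 - 2 sn²); and 𝓛_+(ξ·cn·dn) = 2 sn (1 + k² - 2k² sn²). -/

import Mathlib

/-!
Differentiating the Jacobi identities gives `sn'' = -(1+k²) sn + 2k² sn³`, from which
`𝓛₊ sn = 4k² sn³`, and differentiating once more shows that `sn' = cn·dn` lies in the kernel
of `𝓛₊`.
The other two identities then follow from the product rule
`𝓛₊(f g) = (𝓛₊ f) g - 2 f' g' - f g''` with `f = cn·dn` and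
`g = ξ`, resp. `g = ∫₀^ξ sn²/dn²`.
-/

/-- The operator `𝓛₊ = -∂_ξ² - (1+k²) + 6k² sn²`. -/
noncomputable def Lp15 (k : ℝ) (sn g : ℝ → ℝ) : ℝ → ℝ :=
  fun ξ => -(deriv (deriv g) ξ) + (-(1+k^2) + 6*k^2*(sn ξ)^2) * g ξ

section Operator

variable {k ξ : ℝ} {s f f' g g' : ℝ → ℝ} {f'' g'' : ℝ}

theorem Lp15_eq_of_hasDerivAt (hf : ∀ t, HasDerivAt f (f' t) t) (hf' : HasDerivAt f' f'' ξ) :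
    Lp15 k s f ξ = -f'' + (-(1+k^2) + 6*k^2*(s ξ)^2) * f ξ := by
  rw [Lp15, show deriv f = f' from funext fun t => (hf t).deriv, hf'.deriv]

theorem Lp15_mul (hf : ∀ t, HasDerivAt f (f' t) t) (hf' : HasDerivAt f' f'' ξ)
    (hg : ∀ t, HasDerivAt g (g' t) t) (hg' : HasDerivAt g' g'' ξ) :
    Lp15 k s (fun t => f t * g t) ξ = Lp15 k s f ξ * g ξ - 2 * f' ξ * g' ξ - f ξ * g'' := by
  have hfg : ∀ t, HasDerivAt (fun t => f t * g t) (f' t * g t + f t * g' t) t :=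
    fun t => (hf t).mul (hg t)
  have hfg' : HasDerivAt (fun t => f' t * g t + f t * g' t)
      (f'' * g ξ + f' ξ * g' ξ + (f' ξ * g' ξ + f ξ * g'')) ξ :=
    (hf'.mul (hg ξ)).add ((hf ξ).mul hg')
  rw [Lp15_eq_of_hasDerivAt hfg hfg', Lp15_eq_of_hasDerivAt hf hf']
  ring

end Operator

section Jacobi

variable {k : ℝ} {sn cn dn : ℝ → ℝ}

theorem dn_ne_zero (hk : k ^ 2 < 1) (hdn2 : ∀ ξ, dn ξ ^ 2 = 1 - k ^ 2 * sn ξ ^ 2)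
    (hcn2 : ∀ ξ, cn ξ ^ 2 = 1 - sn ξ ^ 2) (ξ : ℝ) : dn ξ ≠ 0 := by
  have hsn_sq : sn ξ ^ 2 ≤ 1 := by nlinarith [hcn2 ξ, sq_nonneg (cn ξ)]
  have hdn_sq : 0 < dn ξ ^ 2 := by nlinarith [hdn2 ξ, sq_nonneg k, sq_nonneg (sn ξ)]
  exact fun h => by simp [h] at hdn_sq

theorem hasDerivAt_cn_mul_dn (hcn : ∀ ξ, HasDerivAt cn (-(sn ξ * dn ξ)) ξ)
    (hdn : ∀ ξ, HasDerivAt dn (-(k^2 * sn ξ * cn ξ)) ξ)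
    (hdn2 : ∀ ξ, dn ξ ^ 2 = 1 - k ^ 2 * sn ξ ^ 2) (hcn2 : ∀ ξ, cn ξ ^ 2 = 1 - sn ξ ^ 2)
    (ξ : ℝ) :
    HasDerivAt (fun t => cn t * dn t) (-(1 + k^2) * sn ξ + 2 * k^2 * sn ξ ^ 3) ξ := by
  refine ((hcn ξ).mul (hdn ξ)).congr_deriv ?_
  linear_combination -sn ξ * hdn2 ξ - k ^ 2 * sn ξ * hcn2 ξ

theorem Lp15_sn (hsn : ∀ ξ, HasDerivAt sn (cn ξ * dn ξ) ξ)
    (hcn : ∀ ξ, HasDerivAt cn (-(sn ξ * dn ξ)) ξ)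
    (hdn : ∀ ξ, HasDerivAt dn (-(k^2 * sn ξ * cn ξ)) ξ)
    (hdn2 : ∀ ξ, dn ξ ^ 2 = 1 - k ^ 2 * sn ξ ^ 2) (hcn2 : ∀ ξ, cn ξ ^ 2 = 1 - sn ξ ^ 2)
    (ξ : ℝ) :
    Lp15 k sn sn ξ = 4 * k^2 * sn ξ ^ 3 := by
  rw [Lp15_eq_of_hasDerivAt hsn (hasDerivAt_cn_mul_dn hcn hdn hdn2 hcn2 ξ)]
  ring

theorem hasDerivAt_cubic_sn (hsn : ∀ ξ, HasDerivAt sn (cn ξ * dn ξ) ξ) (ξ : ℝ) :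
    HasDerivAt (fun t => -(1 + k^2) * sn t + 2 * k^2 * sn t ^ 3)
      ((-(1 + k^2) + 6 * k^2 * sn ξ ^ 2) * (cn ξ * dn ξ)) ξ := by
  refine (((hsn ξ).const_mul (-(1 + k^2))).add
    (((hsn ξ).pow 3).const_mul (2 * k^2))).congr_deriv ?_
  ring

theorem Lp15_cn_mul_dn (hsn : ∀ ξ, HasDerivAt sn (cn ξ * dn ξ) ξ)
    (hcn : ∀ ξ, HasDerivAt cn (-(sn ξ * dn ξ)) ξ)
    (hdn : ∀ ξ, HasDerivAt dn (-(k^2 * sn ξ * cn ξ)) ξ)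
    (hdn2 : ∀ ξ, dn ξ ^ 2 = 1 - k ^ 2 * sn ξ ^ 2) (hcn2 : ∀ ξ, cn ξ ^ 2 = 1 - sn ξ ^ 2)
    (ξ : ℝ) :
    Lp15 k sn (fun t => cn t * dn t) ξ = 0 := by
  rw [Lp15_eq_of_hasDerivAt (hasDerivAt_cn_mul_dn hcn hdn hdn2 hcn2) (hasDerivAt_cubic_sn hsn ξ)]
  ring

theorem hasDerivAt_sn_sq_div_dn_sq (hsn : ∀ ξ, HasDerivAt sn (cn ξ * dn ξ) ξ)
    (hdn : ∀ ξ, HasDerivAt dn (-(k^2 * sn ξ * cn ξ)) ξ)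
    (hdn2 : ∀ ξ, dn ξ ^ 2 = 1 - k ^ 2 * sn ξ ^ 2) {ξ : ℝ} (hξ : dn ξ ≠ 0) :
    HasDerivAt (fun t => sn t ^ 2 / dn t ^ 2) (2 * sn ξ * cn ξ / dn ξ ^ 3) ξ := by
  refine (((hsn ξ).pow 2).div ((hdn ξ).pow 2) (pow_ne_zero 2 hξ)).congr_deriv ?_
  simp only [Pi.pow_apply]
  field_simp
  linear_combination 2 * sn ξ * cn ξ * dn ξ * hdn2 ξ

end Jacobi

theorem stmt15_general (k : ℝ) (hk : k ∈ Set.Ioo (0:ℝ) 1)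
    (sn cn dn : ℝ → ℝ)
    (hsn : ∀ ξ : ℝ, HasDerivAt sn (cn ξ * dn ξ) ξ)
    (hcn : ∀ ξ : ℝ, HasDerivAt cn (-(sn ξ * dn ξ)) ξ)
    (hdn : ∀ ξ : ℝ, HasDerivAt dn (-(k^2 * sn ξ * cn ξ)) ξ)
    (hdn2 : ∀ ξ : ℝ, (dn ξ)^2 = 1 - k^2*(sn ξ)^2)
    (hcn2 : ∀ ξ : ℝ, (cn ξ)^2 = 1 - (sn ξ)^2) :
    (∀ ξ : ℝ, Lp15 k sn sn ξ = 4*k^2*(sn ξ)^3) ∧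
    (∀ ξ : ℝ, Lp15 k sn (fun t => cn t * dn t * ∫ y in (0:ℝ)..t, (sn y)^2/(dn y)^2) ξ
        = -2 * sn ξ * (1 - 2*(sn ξ)^2)) ∧
    (∀ ξ : ℝ, Lp15 k sn (fun t => t * cn t * dn t) ξ
        = 2 * sn ξ * (1 + k^2 - 2*k^2*(sn ξ)^2)) := by
  have hdn_ne : ∀ ξ, dn ξ ≠ 0 := dn_ne_zero (by nlinarith [hk.1, hk.2]) hdn2 hcn2
  have hA := hasDerivAt_cn_mul_dn hcn hdn hdn2 hcn2
  have hkernel := Lp15_cn_mul_dn hsn hcn hdn hdn2 hcn2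
  refine ⟨Lp15_sn hsn hcn hdn hdn2 hcn2, fun ξ => ?_, fun ξ => ?_⟩
  · have hcont : Continuous fun y => sn y ^ 2 / dn y ^ 2 :=
      ((continuous_iff_continuousAt.2 fun t => (hsn t).continuousAt).pow 2).div
        ((continuous_iff_continuousAt.2 fun t => (hdn t).continuousAt).pow 2)
        fun t => pow_ne_zero 2 (hdn_ne t)
    rw [Lp15_mul hA (hasDerivAt_cubic_sn hsn ξ)
      (fun t => (hcont.integral_hasStrictDerivAt 0 t).hasDerivAt)
      (hasDerivAt_sn_sq_div_dn_sq hsn hdn hdn2 (hdn_ne ξ)), hkernel]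
    field_simp [hdn_ne ξ]
    linear_combination 2 * sn ξ * (1 - 2 * sn ξ ^ 2) * hdn2 ξ - 2 * sn ξ * hcn2 ξ
  · rw [show (fun t => t * cn t * dn t) = fun t => cn t * dn t * t from funext fun t => by ring,
      Lp15_mul hA (hasDerivAt_cubic_sn hsn ξ) hasDerivAt_id' (hasDerivAt_const ξ (1 : ℝ)),
      hkernel]
    ring

theorem stmt15 (k : ℝ) (hk : k ∈ Set.Ioo (0:ℝ) 1)
    (sn cn dn : ℝ → ℝ)
    (hsn : ∀ ξ : ℝ, HasDerivAt sn (cn ξ * dn ξ) ξ)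
    (hcn : ∀ ξ : ℝ, HasDerivAt cn (-(sn ξ * dn ξ)) ξ)
    (hdn : ∀ ξ : ℝ, HasDerivAt dn (-(k^2 * sn ξ * cn ξ)) ξ)
    (hsn0 : sn 0 = 0) (hcn0 : cn 0 = 1) (hdn0 : dn 0 = 1)
    (hdn2 : ∀ ξ : ℝ, (dn ξ)^2 = 1 - k^2*(sn ξ)^2)
    (hcn2 : ∀ ξ : ℝ, (cn ξ)^2 = 1 - (sn ξ)^2) :
    (∀ ξ : ℝ, Lp15 k sn sn ξ = 4*k^2*(sn ξ)^3) ∧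
    (∀ ξ : ℝ, Lp15 k sn (fun t => cn t * dn t * ∫ y in (0:ℝ)..t, (sn y)^2/(dn y)^2) ξ
        = -2 * sn ξ * (1 - 2*(sn ξ)^2)) ∧
    (∀ ξ : ℝ, Lp15 k sn (fun t => t * cn t * dn t) ξ
        = 2 * sn ξ * (1 + k^2 - 2*k^2*(sn ξ)^2)) :=
  stmt15_general k hk sn cn dn hsn hcn hdn hdn2 hcn2
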